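/- Let Ω ⊂ ℝ^d be bounded, Γ_out ⊂ ∂Ω, D : Ω → ℝ continuous attaining its minimum exactly on Γ_out (and constant there). Let ρ^{k−1}, ρ^k ∈ K with ρ^k minimizing ρ ↦ ∫ D dρ + I_K(ρ) + W₂²(ρ, ρ^{k−1})/(2τ), and let γ be an optimal transport plan from ρ^k to ρ^{k−1}. Then for every (x, y) in the support of γ with y ∈ Γ_out, one has x = y. In particular, the mass that ρ^{k−1} carries on Γ_out does not move. -/

import Mathlib

open MeasureTheory
open scoped ENNReal NNReal

noncomputable def IsCoupling {d : ℕ} (γ : Measure (EuclideanSpace ℝ (Fin d) × EuclideanSpace ℝ (Fin d)))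
    (μ ν : Measure (EuclideanSpace ℝ (Fin d))) : Prop :=
  γ.map Prod.fst = μ ∧ γ.map Prod.snd = ν

/-- The Wasserstein distance of order `p` (defined as an infimum over couplings). -/
noncomputable def Wass {d : ℕ} (p : ℝ) (μ ν : Measure (EuclideanSpace ℝ (Fin d))) : ℝ :=
  sInf { c : ℝ | ∃ γ : Measure (EuclideanSpace ℝ (Fin d) × EuclideanSpace ℝ (Fin d)),
    IsCoupling γ μ ν ∧ c = (∫ z, dist z.1 z.2 ^ p ∂γ) ^ (1/p) }

/-- Admissible measures: density `≤ 1` inside `Ω` plus a singular part on `Γout`. -/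
def KsetExit {d : ℕ} (Ω Γout : Set (EuclideanSpace ℝ (Fin d))) :
    Set (Measure (EuclideanSpace ℝ (Fin d))) :=
  {μ | IsProbabilityMeasure μ ∧
    ∃ (μΩ μS : Measure (EuclideanSpace ℝ (Fin d))) (f : EuclideanSpace ℝ (Fin d) → ℝ≥0∞),
      μ = μΩ + μS ∧ μΩ = (volume.restrict Ω).withDensity f ∧
      (∀ᵐ x ∂(volume.restrict Ω), f x ≤ 1) ∧ μS Γoutᶜ = 0}

/-!
Push the optimal plan `γ` forward by `F(x, y) = (y, y)` if `y ∈ Γout` and `F(x, y) = (x, y)`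
otherwise (`exitPlan Γout`). Off `Γout` the first marginal of `F_#γ` is dominated by that of `γ`,
hence by Lebesgue measure on `Ω`, so it is again admissible. As `D` is minimal on `Γout`, its
integral does not increase, while the cost of `F_#γ`, a coupling of the new measure with `ρkm1`,
is strictly smaller than the optimal cost `W₂²(ρk, ρkm1)` as soon as `γ` moves a set of positive
mass into `Γout`. This contradicts the minimality of `ρk`.
-/

open Set

lemma integrable_of_ae_mem_isCompact {X E : Type*} [TopologicalSpace X] [T2Space X]
    [MeasurableSpace X] [OpensMeasurableSpace X] [NormedAddCommGroup E] {μ : Measure X}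
    [IsFiniteMeasure μ] {f : X → E} {K : Set X} (hK : IsCompact K) (hf : ContinuousOn f K)
    (h : ∀ᵐ x ∂μ, x ∈ K) : Integrable f μ := by
  rw [← Measure.restrict_eq_self_of_ae_mem h]
  exact hf.integrableOn_compact hK

lemma integral_lt_integral_of_le_of_measure_ne_zero {α : Type*} [MeasurableSpace α] {μ : Measure α}
    {f g : α → ℝ} (hf : Integrable f μ) (hg : Integrable g μ) (hle : f ≤ g) {s : Set α}
    (hs : μ s ≠ 0) (hlt : ∀ x ∈ s, f x < g x) : ∫ x, f x ∂μ < ∫ x, g x ∂μ := by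
  have hpos : 0 < ∫ x, g x - f x ∂μ := by
    rw [integral_pos_iff_support_of_nonneg (f := fun x => g x - f x)
      (fun x => sub_nonneg.2 (hle x)) (hg.sub hf)]
    exact (pos_iff_ne_zero.2 hs).trans_le
      (measure_mono fun x hx => sub_ne_zero.2 (hlt x hx).ne')
  rw [integral_sub hg hf] at hpos
  linarith

section ExitPlan

variable {α : Type*} {Γ : Set α} {z : α × α}

open Classical in
noncomputable def exitPlan (Γ : Set α) (z : α × α) : α × α :=
  (if z.2 ∈ Γ then z.2 else z.1, z.2)

lemma exitPlan_of_mem (h : z.2 ∈ Γ) : exitPlan Γ z = (z.2, z.2) := by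
  simp [exitPlan, h]

lemma exitPlan_of_notMem (h : z.2 ∉ Γ) : exitPlan Γ z = z := by
  simp [exitPlan, h]

lemma snd_comp_exitPlan : Prod.snd ∘ exitPlan Γ = Prod.snd := rfl

lemma measurable_exitPlan [MeasurableSpace α] (hΓ : MeasurableSet Γ) :
    Measurable (exitPlan Γ) :=
  (Measurable.ite (measurable_snd hΓ) measurable_snd measurable_fst).prodMk measurable_snd

lemma dist_exitPlan_le [PseudoMetricSpace α] (Γ : Set α) (z : α × α) :
    dist (exitPlan Γ z).1 (exitPlan Γ z).2 ≤ dist z.1 z.2 := by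
  by_cases h : z.2 ∈ Γ
  · simp [exitPlan_of_mem h]
  · simp [exitPlan_of_notMem h]

lemma dist_exitPlan_lt [MetricSpace α] (h : z.2 ∈ Γ) (hne : z.1 ≠ z.2) :
    dist (exitPlan Γ z).1 (exitPlan Γ z).2 < dist z.1 z.2 := by
  simpa [exitPlan_of_mem h] using dist_pos.2 hne

lemma apply_fst_exitPlan_le {f : α → ℝ} {S : Set α} (hf : ∀ y ∈ Γ, ∀ x ∈ S, f y ≤ f x)
    (hz : z.1 ∈ S) : f (exitPlan Γ z).1 ≤ f z.1 := by
  by_cases h : z.2 ∈ Γ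
  · simpa [exitPlan_of_mem h] using hf _ h _ hz
  · simp [exitPlan_of_notMem h]

variable [MeasurableSpace α] {γ : Measure (α × α)}

lemma restrict_compl_map_fst_map_exitPlan_le (hΓ : MeasurableSet Γ) :
    ((γ.map (exitPlan Γ)).map Prod.fst).restrict Γᶜ ≤ (γ.map Prod.fst).restrict Γᶜ := by
  refine Measure.le_iff.2 fun A hA => ?_
  have hAΓ := hA.inter hΓ.compl
  rw [Measure.restrict_apply hA, Measure.restrict_apply hA,
    Measure.map_map measurable_fst (measurable_exitPlan hΓ),
    Measure.map_apply (measurable_fst.comp (measurable_exitPlan hΓ)) hAΓ,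
    Measure.map_apply measurable_fst hAΓ]
  refine measure_mono fun z hz => ?_
  by_cases h : z.2 ∈ Γ
  · simp only [mem_preimage, Function.comp_apply, exitPlan_of_mem h] at hz
    exact absurd h hz.2
  · simpa only [mem_preimage, Function.comp_apply, exitPlan_of_notMem h] using hz

lemma integral_map_fst_map_exitPlan_le (hΓ : MeasurableSet Γ) {f : α → ℝ} {S : Set α}
    (hf : ∀ y ∈ Γ, ∀ x ∈ S, f y ≤ f x) (hS : ∀ᵐ z ∂γ, z.1 ∈ S)
    (hi : Integrable f (γ.map Prod.fst))
    (hi' : Integrable f ((γ.map (exitPlan Γ)).map Prod.fst)) :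
    ∫ x, f x ∂((γ.map (exitPlan Γ)).map Prod.fst) ≤ ∫ x, f x ∂(γ.map Prod.fst) := by
  have hF := (measurable_fst.comp (measurable_exitPlan hΓ)).aemeasurable (μ := γ)
  rw [Measure.map_map measurable_fst (measurable_exitPlan hΓ)] at hi' ⊢
  rw [integral_map hF hi'.aestronglyMeasurable,
    integral_map measurable_fst.aemeasurable hi.aestronglyMeasurable]
  refine integral_mono_ae ((integrable_map_measure hi'.aestronglyMeasurable hF).1 hi')
    ((integrable_map_measure hi.aestronglyMeasurable measurable_fst.aemeasurable).1 hi) ?_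
  filter_upwards [hS] with z hz using apply_fst_exitPlan_le hf hz

lemma integral_dist_sq_map_exitPlan_lt [MetricSpace α] [OpensMeasurableSpace α]
    [SecondCountableTopology α] (hΓ : MeasurableSet Γ)
    (hi : Integrable (fun z => dist z.1 z.2 ^ 2) γ)
    (hmove : γ {z | z.2 ∈ Γ ∧ z.1 ≠ z.2} ≠ 0) :
    ∫ z, dist z.1 z.2 ^ 2 ∂(γ.map (exitPlan Γ)) < ∫ z, dist z.1 z.2 ^ 2 ∂γ := by
  have hF := measurable_exitPlan hΓ
  have hcost : Measurable fun z : α × α => dist z.1 z.2 ^ 2 :=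
    (measurable_fst.dist measurable_snd).pow_const 2
  have hle : ∀ z, dist (exitPlan Γ z).1 (exitPlan Γ z).2 ^ 2 ≤ dist z.1 z.2 ^ 2 := fun z =>
    pow_le_pow_left₀ dist_nonneg (dist_exitPlan_le Γ z) 2
  rw [integral_map hF.aemeasurable hcost.aestronglyMeasurable]
  refine integral_lt_integral_of_le_of_measure_ne_zero ?_ hi hle hmove fun z hz =>
    pow_lt_pow_left₀ (dist_exitPlan_lt hz.1 hz.2) dist_nonneg two_ne_zero
  refine hi.mono (hcost.comp hF).aestronglyMeasurable (ae_of_all _ fun z => ?_)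
  simpa only [Real.norm_of_nonneg (sq_nonneg _)] using hle z

end ExitPlan

section Coupling

variable {d : ℕ} {μ ν : Measure (EuclideanSpace ℝ (Fin d))}
  {γ : Measure (EuclideanSpace ℝ (Fin d) × EuclideanSpace ℝ (Fin d))}

lemma IsCoupling.isProbabilityMeasure (h : IsCoupling γ μ ν) [hμ : IsProbabilityMeasure μ] :
    IsProbabilityMeasure γ := by
  rw [← h.1] at hμ
  exact Measure.isProbabilityMeasure_of_map Prod.fst

lemma IsCoupling.ae_mem_prod (h : IsCoupling γ μ ν) {s t : Set (EuclideanSpace ℝ (Fin d))}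
    (hs : ∀ᵐ x ∂μ, x ∈ s) (ht : ∀ᵐ y ∂ν, y ∈ t) : ∀ᵐ z ∂γ, z ∈ s ×ˢ t := by
  rw [← h.1] at hs
  rw [← h.2] at ht
  filter_upwards [ae_of_ae_map measurable_fst.aemeasurable hs,
    ae_of_ae_map measurable_snd.aemeasurable ht] with z hzs hzt using ⟨hzs, hzt⟩

lemma IsCoupling.map_exitPlan (h : IsCoupling γ μ ν) {Γ : Set (EuclideanSpace ℝ (Fin d))}
    (hΓ : MeasurableSet Γ) :
    IsCoupling (γ.map (exitPlan Γ)) ((γ.map (exitPlan Γ)).map Prod.fst) ν :=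
  ⟨rfl, by
    rw [Measure.map_map measurable_snd (measurable_exitPlan hΓ), snd_comp_exitPlan, h.2]⟩

lemma Wass_two_eq_sInf_sqrt (μ ν : Measure (EuclideanSpace ℝ (Fin d))) :
    Wass 2 μ ν = sInf {c : ℝ |
      ∃ γ : Measure (EuclideanSpace ℝ (Fin d) × EuclideanSpace ℝ (Fin d)),
        IsCoupling γ μ ν ∧ c = √(∫ z, dist z.1 z.2 ^ 2 ∂γ)} := by
  simp only [Wass, Real.rpow_two, Real.sqrt_eq_rpow]

lemma Wass_two_sq_le (h : IsCoupling γ μ ν) : Wass 2 μ ν ^ 2 ≤ ∫ z, dist z.1 z.2 ^ 2 ∂γ := by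
  have hle : Wass 2 μ ν ≤ √(∫ z, dist z.1 z.2 ^ 2 ∂γ) := by
    rw [Wass_two_eq_sInf_sqrt]
    refine csInf_le ⟨0, ?_⟩ ⟨γ, h, rfl⟩
    rintro c ⟨γ', -, rfl⟩
    exact Real.sqrt_nonneg _
  have hnonneg : 0 ≤ Wass 2 μ ν := by
    rw [Wass_two_eq_sInf_sqrt]
    refine Real.sInf_nonneg ?_
    rintro c ⟨γ', -, rfl⟩
    exact Real.sqrt_nonneg _
  calc Wass 2 μ ν ^ 2 ≤ √(∫ z, dist z.1 z.2 ^ 2 ∂γ) ^ 2 := pow_le_pow_left₀ hnonneg hle 2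
    _ = ∫ z, dist z.1 z.2 ^ 2 ∂γ := Real.sq_sqrt (integral_nonneg fun z => sq_nonneg _)

lemma integral_le_Wass_two_sq (h : IsCoupling γ μ ν)
    (hopt : ∀ γ', IsCoupling γ' μ ν → ∫ z, dist z.1 z.2 ^ 2 ∂γ ≤ ∫ z, dist z.1 z.2 ^ 2 ∂γ') :
    ∫ z, dist z.1 z.2 ^ 2 ∂γ ≤ Wass 2 μ ν ^ 2 := by
  have hle : √(∫ z, dist z.1 z.2 ^ 2 ∂γ) ≤ Wass 2 μ ν := by
    rw [Wass_two_eq_sInf_sqrt]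
    refine le_csInf ⟨_, γ, h, rfl⟩ ?_
    rintro c ⟨γ', hγ', rfl⟩
    exact Real.sqrt_le_sqrt (hopt γ' hγ')
  calc ∫ z, dist z.1 z.2 ^ 2 ∂γ = √(∫ z, dist z.1 z.2 ^ 2 ∂γ) ^ 2 :=
        (Real.sq_sqrt (integral_nonneg fun z => sq_nonneg _)).symm
    _ ≤ Wass 2 μ ν ^ 2 := pow_le_pow_left₀ (Real.sqrt_nonneg _) hle 2

end Coupling

section Admissible

variable {d : ℕ} {Ω Γ : Set (EuclideanSpace ℝ (Fin d))}
  {μ : Measure (EuclideanSpace ℝ (Fin d))}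

lemma restrict_compl_le_of_mem_KsetExit (hμ : μ ∈ KsetExit Ω Γ) :
    μ.restrict Γᶜ ≤ volume.restrict Ω := by
  obtain ⟨-, μΩ, μS, f, rfl, rfl, hf, hμS⟩ := hμ
  rw [Measure.restrict_add, Measure.restrict_eq_zero.2 hμS, add_zero]
  calc ((volume.restrict Ω).withDensity f).restrict Γᶜ
      ≤ (volume.restrict Ω).withDensity f := Measure.restrict_le_self
    _ ≤ (volume.restrict Ω).withDensity 1 := withDensity_mono hf
    _ = volume.restrict Ω := withDensity_one

lemma mem_KsetExit_of_restrict_compl_le (hΓ : MeasurableSet Γ) [IsProbabilityMeasure μ]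
    (hle : μ.restrict Γᶜ ≤ volume.restrict Ω) : μ ∈ KsetExit Ω Γ :=
  ⟨‹_›, μ.restrict Γᶜ, μ.restrict Γ, (μ.restrict Γᶜ).rnDeriv (volume.restrict Ω),
    (Measure.restrict_compl_add_restrict hΓ).symm,
    (Measure.withDensity_rnDeriv_eq _ _ (Measure.absolutelyContinuous_of_le hle)).symm,
    Measure.rnDeriv_le_one_of_le hle, by simp [Measure.restrict_apply hΓ.compl]⟩

lemma ae_mem_closure_of_mem_KsetExit (hΓ : Γ ⊆ closure Ω) (hμ : μ ∈ KsetExit Ω Γ) :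
    ∀ᵐ x ∂μ, x ∈ closure Ω := by
  have hnull : volume.restrict Ω (closure Ω)ᶜ = 0 := by
    rw [Measure.restrict_apply isClosed_closure.isOpen_compl.measurableSet]
    exact measure_mono_null (fun x hx => hx.1 (subset_closure hx.2)) measure_empty
  rw [ae_iff]
  change μ (closure Ω)ᶜ = 0
  rw [← Measure.restrict_eq_self μ (compl_subset_compl.2 hΓ), ← nonpos_iff_eq_zero, ← hnull]
  exact Measure.le_iff'.1 (restrict_compl_le_of_mem_KsetExit hμ) _

lemma integrable_of_mem_KsetExit (hΩ : Bornology.IsBounded Ω) (hΓ : Γ ⊆ closure Ω)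
    {f : EuclideanSpace ℝ (Fin d) → ℝ} (hf : ContinuousOn f (closure Ω)) (hμ : μ ∈ KsetExit Ω Γ) :
    Integrable f μ :=
  have := hμ.1
  integrable_of_ae_mem_isCompact hΩ.isCompact_closure hf (ae_mem_closure_of_mem_KsetExit hΓ hμ)

lemma map_fst_map_exitPlan_mem_KsetExit (hΓ : MeasurableSet Γ)
    {γ : Measure (EuclideanSpace ℝ (Fin d) × EuclideanSpace ℝ (Fin d))}
    (hγ : γ.map Prod.fst ∈ KsetExit Ω Γ) :
    (γ.map (exitPlan Γ)).map Prod.fst ∈ KsetExit Ω Γ := by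
  have := hγ.1
  have : IsProbabilityMeasure γ := Measure.isProbabilityMeasure_of_map Prod.fst
  have : IsProbabilityMeasure (γ.map (exitPlan Γ)) :=
    Measure.isProbabilityMeasure_map (measurable_exitPlan hΓ).aemeasurable
  have : IsProbabilityMeasure ((γ.map (exitPlan Γ)).map Prod.fst) :=
    Measure.isProbabilityMeasure_map measurable_fst.aemeasurable
  exact mem_KsetExit_of_restrict_compl_le hΓ
    ((restrict_compl_map_fst_map_exitPlan_le hΓ).trans (restrict_compl_le_of_mem_KsetExit hγ))

end Admissible

section MinimumOnExit

variable {X : Type*} [TopologicalSpace X] {Ω Γ : Set X} {D : X → ℝ} {m : ℝ}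

lemma isClosed_of_isMin_on_exit (hΓ : Γ ⊆ closure Ω) (hD : Continuous D)
    (hDmin : ∀ x ∈ Γ, D x = m) (hDgt : ∀ x ∈ closure Ω \ Γ, m < D x) : IsClosed Γ := by
  have hΓeq : Γ = closure Ω ∩ D ⁻¹' {m} := by
    refine Subset.antisymm (fun x hx => ⟨hΓ hx, hDmin x hx⟩) fun x ⟨hxΩ, hxm⟩ => ?_
    by_contra hxΓ
    exact (hDgt x ⟨hxΩ, hxΓ⟩).ne' hxm
  rw [hΓeq]
  exact isClosed_closure.inter (isClosed_singleton.preimage hD)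

lemma le_of_isMin_on_exit (hDmin : ∀ x ∈ Γ, D x = m) (hDgt : ∀ x ∈ closure Ω \ Γ, m < D x) :
    ∀ y ∈ Γ, ∀ x ∈ closure Ω, D y ≤ D x := fun y hy x hx => by
  by_cases hxΓ : x ∈ Γ
  · rw [hDmin y hy, hDmin x hxΓ]
  · exact (hDmin y hy).trans_le (hDgt x ⟨hx, hxΓ⟩).le

end MinimumOnExit

theorem stmt17_general {d : ℕ} (Ω : Set (EuclideanSpace ℝ (Fin d)))
    (hΩb : Bornology.IsBounded Ω)
    (Γout : Set (EuclideanSpace ℝ (Fin d))) (hΓ : Γout ⊆ frontier Ω)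
    (D : EuclideanSpace ℝ (Fin d) → ℝ) (hDcont : Continuous D)
    (m : ℝ) (hDmin : ∀ x ∈ Γout, D x = m)
    (hDgt : ∀ x ∈ closure Ω \ Γout, m < D x)
    (τ : ℝ) (hτ : 0 < τ)
    (ρkm1 ρk : Measure (EuclideanSpace ℝ (Fin d)))
    (hρkm1 : ρkm1 ∈ KsetExit Ω Γout) (hρk : ρk ∈ KsetExit Ω Γout)
    (hmin : ∀ ρ ∈ KsetExit Ω Γout,
      (∫ x, D x ∂ρk) + Wass 2 ρk ρkm1 ^ 2 / (2 * τ) ≤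
        (∫ x, D x ∂ρ) + Wass 2 ρ ρkm1 ^ 2 / (2 * τ))
    (γ : Measure (EuclideanSpace ℝ (Fin d) × EuclideanSpace ℝ (Fin d)))
    (hγ : IsCoupling γ ρk ρkm1)
    (hγopt : ∀ γ' : Measure (EuclideanSpace ℝ (Fin d) × EuclideanSpace ℝ (Fin d)),
      IsCoupling γ' ρk ρkm1 → (∫ z, dist z.1 z.2 ^ 2 ∂γ) ≤ ∫ z, dist z.1 z.2 ^ 2 ∂γ') :
    γ {z : EuclideanSpace ℝ (Fin d) × EuclideanSpace ℝ (Fin d) |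
        z.2 ∈ Γout ∧ z.1 ≠ z.2} = 0 := by
  by_contra hmove
  have hΓcl : Γout ⊆ closure Ω := hΓ.trans frontier_subset_closure
  have hΓm := (isClosed_of_isMin_on_exit hΓcl hDcont hDmin hDgt).measurableSet
  have := hρk.1
  have := hγ.isProbabilityMeasure
  set γ' := γ.map (exitPlan Γout)
  set ρ := γ'.map Prod.fst
  have hγ' : IsCoupling γ' ρ ρkm1 := hγ.map_exitPlan hΓm
  have hρ : ρ ∈ KsetExit Ω Γout := map_fst_map_exitPlan_mem_KsetExit hΓm (hγ.1 ▸ hρk)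
  have hγsupp := hγ.ae_mem_prod (ae_mem_closure_of_mem_KsetExit hΓcl hρk)
    (ae_mem_closure_of_mem_KsetExit hΓcl hρkm1)
  have hD : ∫ x, D x ∂ρ ≤ ∫ x, D x ∂ρk := by
    rw [← hγ.1] at hρk ⊢
    exact integral_map_fst_map_exitPlan_le hΓm (le_of_isMin_on_exit hDmin hDgt)
      (hγsupp.mono fun z hz => hz.1) (integrable_of_mem_KsetExit hΩb hΓcl hDcont.continuousOn hρk)
      (integrable_of_mem_KsetExit hΩb hΓcl hDcont.continuousOn hρ)
  have hcost : ∫ z, dist z.1 z.2 ^ 2 ∂γ' < ∫ z, dist z.1 z.2 ^ 2 ∂γ :=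
    integral_dist_sq_map_exitPlan_lt hΓm (integrable_of_ae_mem_isCompact
      (hΩb.isCompact_closure.prod hΩb.isCompact_closure) (continuous_dist.pow 2).continuousOn
      hγsupp) hmove
  have hW : Wass 2 ρk ρkm1 ^ 2 ≤ Wass 2 ρ ρkm1 ^ 2 := by
    have := hmin ρ hρ
    rw [← div_le_div_iff_of_pos_right (by positivity : (0 : ℝ) < 2 * τ)]
    linarith
  linarith [integral_le_Wass_two_sq hγ hγopt, Wass_two_sq_le hγ']

theorem stmt17 {d : ℕ} (Ω : Set (EuclideanSpace ℝ (Fin d)))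
    (hΩo : IsOpen Ω) (hΩb : Bornology.IsBounded Ω)
    (Γout : Set (EuclideanSpace ℝ (Fin d))) (hΓ : Γout ⊆ frontier Ω)
    (D : EuclideanSpace ℝ (Fin d) → ℝ) (hDcont : Continuous D)
    (m : ℝ) (hDmin : ∀ x ∈ Γout, D x = m)
    (hDgt : ∀ x ∈ closure Ω \ Γout, m < D x)
    (τ : ℝ) (hτ : 0 < τ)
    (ρkm1 ρk : Measure (EuclideanSpace ℝ (Fin d)))
    (hρkm1 : ρkm1 ∈ KsetExit Ω Γout) (hρk : ρk ∈ KsetExit Ω Γout)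
    (hmin : ∀ ρ ∈ KsetExit Ω Γout,
      (∫ x, D x ∂ρk) + Wass 2 ρk ρkm1 ^ 2 / (2 * τ) ≤
        (∫ x, D x ∂ρ) + Wass 2 ρ ρkm1 ^ 2 / (2 * τ))
    (γ : Measure (EuclideanSpace ℝ (Fin d) × EuclideanSpace ℝ (Fin d)))
    (hγ : IsCoupling γ ρk ρkm1)
    (hγopt : ∀ γ' : Measure (EuclideanSpace ℝ (Fin d) × EuclideanSpace ℝ (Fin d)),
      IsCoupling γ' ρk ρkm1 → (∫ z, dist z.1 z.2 ^ 2 ∂γ) ≤ ∫ z, dist z.1 z.2 ^ 2 ∂γ') :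
    γ {z : EuclideanSpace ℝ (Fin d) × EuclideanSpace ℝ (Fin d) |
        z.2 ∈ Γout ∧ z.1 ≠ z.2} = 0 :=
  stmt17_general Ω hΩb Γout hΓ D hDcont m hDmin hDgt τ hτ ρkm1 ρk hρkm1 hρk hmin γ hγ hγopt
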